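/- arXiv:1612.03319 — 3 statements merged into one kernel-verified Lean document; each statement's English description precedes it below -/
import Mathlib

section
/- If the hold time satisfies H > ε almost surely for all x (so F̄_τ(l|x) = 1 for l < ε), then conditioning the anytime distribution α on the event {L < ε} recovers the target: α(dx | L < ε) = π(dx). Explicitly, α(A × [0,ε)) / α(X × [0,ε)) = π(A) for all measurable A. -/
open MeasureTheory Set
open scoped ENNReal NNReal

/-! On `X × [0, ε)` the survival function is identically `1`, so there the density of `α` is the
constant `1 / E_τ[H]` and `α` restricted to `X × [0, ε)` is a constant multiple of
`π ⊗ Lebesgue`; the constant and the length `ε` cancel in the ratio. -/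

lemma measure_Ioi_eq_one_of_measure_Iic_eq_zero {μ : Measure ℝ} [IsProbabilityMeasure μ]
    {l ε : ℝ} (hl : l ≤ ε) (h : μ (Iic ε) = 0) : μ (Ioi l) = 1 := by
  rw [← compl_Iic, prob_compl_eq_one_iff measurableSet_Iic]
  exact measure_mono_null (Iic_subset_Iic.mpr hl) h

lemma withDensity_apply_of_subset_of_eqOn {α : Type*} [MeasurableSpace α] {μ : Measure α}
    {f : α → ℝ≥0∞} {c : ℝ≥0∞} {s u : Set α} (hu : MeasurableSet u) (hsu : s ⊆ u)
    (hf : EqOn f (fun _ => c) u) : μ.withDensity f s = c * μ s := by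
  have hrestrict : (μ.withDensity f).restrict u = c • μ.restrict u := by
    rw [restrict_withDensity hu, ← withDensity_const]
    exact withDensity_congr_ae ((ae_restrict_iff' hu).mpr (Filter.Eventually.of_forall hf))
  rw [← Measure.restrict_eq_self _ hsu, hrestrict, Measure.smul_apply,
    Measure.restrict_eq_self _ hsu, smul_eq_mul]

theorem anytime_cond_small_lag_eq_target_general {X : Type*} [MeasurableSpace X]
    (π : Measure X) [IsProbabilityMeasure π]
    (τ : ProbabilityTheory.Kernel X ℝ) [ProbabilityTheory.IsMarkovKernel τ]
    (ε : ℝ) (hε : 0 < ε)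
    (hsupp : ∀ x, τ x (Set.Iic ε) = 0)
    (EH : ℝ≥0∞)
    (hEH0 : EH ≠ 0) (hEHtop : EH ≠ ∞)
    (A : Set X) :
    (((π.prod (volume : Measure ℝ)).withDensity
        (fun p => (Set.Ici (0 : ℝ)).indicator (fun l => τ p.1 (Set.Ioi l) / EH) p.2))
        (A ×ˢ Set.Ico (0 : ℝ) ε))
      / (((π.prod (volume : Measure ℝ)).withDensity
        (fun p => (Set.Ici (0 : ℝ)).indicator (fun l => τ p.1 (Set.Ioi l) / EH) p.2))
        (Set.univ ×ˢ Set.Ico (0 : ℝ) ε))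
      = π A := by
  have hdensity : EqOn
      (fun p : X × ℝ => (Ici (0 : ℝ)).indicator (fun l => τ p.1 (Ioi l) / EH) p.2)
      (fun _ => EH⁻¹) (univ ×ˢ Ico 0 ε) := by
    rintro ⟨x, l⟩ ⟨-, hl0, hlε⟩
    simp only [indicator_of_mem (mem_Ici.mpr hl0),
      measure_Ioi_eq_one_of_measure_Iic_eq_zero hlε.le (hsupp x), one_div]
  have hu : MeasurableSet (univ ×ˢ Ico (0 : ℝ) ε : Set (X × ℝ)) := MeasurableSet.univ.prod measurableSet_Ico
  rw [withDensity_apply_of_subset_of_eqOn hu (prod_mono (subset_univ A) subset_rfl) hdensity,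
    withDensity_apply_of_subset_of_eqOn hu subset_rfl hdensity,
    ENNReal.mul_div_mul_left _ _ (ENNReal.inv_ne_zero.mpr hEHtop) (ENNReal.inv_ne_top.mpr hEH0),
    Measure.prod_prod, Measure.prod_prod, measure_univ, Real.volume_Ico,
    ENNReal.mul_div_mul_right _ _ (by simpa using hε) ENNReal.ofReal_ne_top, div_one]

/-- If the hold time satisfies `H > ε` almost surely for every `x` (so that the survival
function `F̄_τ(l|x) = 1` for `l < ε`), then conditioning the anytime distribution `α` on
the event `{L < ε}` recovers the target: `α(A × [0,ε)) / α(X × [0,ε)) = π(A)` for all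
measurable `A`. -/
theorem anytime_cond_small_lag_eq_target {X : Type*} [MeasurableSpace X]
    (π : Measure X) [IsProbabilityMeasure π]
    (τ : ProbabilityTheory.Kernel X ℝ) [ProbabilityTheory.IsMarkovKernel τ]
    (ε : ℝ) (hε : 0 < ε)
    (hsupp : ∀ x, τ x (Set.Iic ε) = 0)
    (EH : ℝ≥0∞)
    (hEH : EH = ∫⁻ x, (∫⁻ l in Set.Ici (0 : ℝ), τ x (Set.Ioi l)) ∂π)
    (hEH0 : EH ≠ 0) (hEHtop : EH ≠ ∞)
    (A : Set X) (hA : MeasurableSet A) :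
    (((π.prod (volume : Measure ℝ)).withDensity
        (fun p => (Set.Ici (0 : ℝ)).indicator (fun l => τ p.1 (Set.Ioi l) / EH) p.2))
        (A ×ˢ Set.Ico (0 : ℝ) ε))
      / (((π.prod (volume : Measure ℝ)).withDensity
        (fun p => (Set.Ici (0 : ℝ)).indicator (fun l => τ p.1 (Set.Ioi l) / EH) p.2))
        (Set.univ ×ˢ Set.Ico (0 : ℝ) ε))
      = π A :=
  anytime_cond_small_lag_eq_target_general π τ ε hε hsupp EH hEH0 hEHtop A
end

section
/- For univariate probability measures μ and ν with cdfs F_μ and F_ν, the 1-Wasserstein distance equals ∫_{−∞}^{∞} |F_μ(x) − F_ν(x)| dx. -/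
open MeasureTheory ProbabilityTheory Set

/-!
Both sides are computed threshold by threshold. By Tonelli, the cost `∫ |x - y| dγ` of a
coupling equals `∫ γ {(x, y) | t lies between x and y} dt`. Any coupling gives this set mass at
least `|F_μ(t) - F_ν(t)|`, since `F_μ(t) - F_ν(t) ≤ γ {x ≤ t < y}`. Conversely, under the
quantile coupling `u ↦ (F_μ⁻¹(u), F_ν⁻¹(u))` with `u` uniform on `(0, 1)`, the threshold `t`
separates the two coordinates only for `u` between `F_μ(t)` and `F_ν(t)`.
-/

def crossing (t : ℝ) : Set (ℝ × ℝ) := Iic t ×ˢ Ioi t ∪ Ioi t ×ˢ Iic t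

lemma measurableSet_crossing (t : ℝ) : MeasurableSet (crossing t) :=
  (measurableSet_Iic.prod measurableSet_Ioi).union (measurableSet_Ioi.prod measurableSet_Iic)

lemma volume_setOf_mem_crossing (x y : ℝ) :
    volume {t | (x, y) ∈ crossing t} = ENNReal.ofReal |x - y| := by
  have : {t | (x, y) ∈ crossing t} = Ico x y ∪ Ico y x := by
    ext t
    simp only [crossing, mem_ofPred_eq, mem_union, mem_prod, mem_Iic, mem_Ioi, mem_Ico]
    tauto
  rw [this, Ico_union_Ico' le_rfl le_rfl, Real.volume_Ico, max_comm, max_sub_min_eq_abs,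
    abs_sub_comm]

lemma lintegral_ofReal_abs_sub_eq_lintegral_crossing (γ : Measure (ℝ × ℝ)) [SFinite γ] :
    ∫⁻ p, ENNReal.ofReal |p.1 - p.2| ∂γ = ∫⁻ t, γ (crossing t) := by
  have hE : MeasurableSet {q : (ℝ × ℝ) × ℝ | q.1 ∈ crossing q.2} := by
    simp only [crossing, mem_union, mem_prod, mem_Iic, mem_Ioi, ofPred_or, ofPred_and]
    measurability
  calc ∫⁻ p, ENNReal.ofReal |p.1 - p.2| ∂γ
      = ∫⁻ p, volume (Prod.mk p ⁻¹' {q : (ℝ × ℝ) × ℝ | q.1 ∈ crossing q.2}) ∂γ := by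
        simp_rw [← volume_setOf_mem_crossing]; rfl
    _ = γ.prod volume {q : (ℝ × ℝ) × ℝ | q.1 ∈ crossing q.2} := (Measure.prod_apply hE).symm
    _ = ∫⁻ t, γ (crossing t) := Measure.prod_apply_symm hE

lemma fst_Iic_sub_snd_Iic_le (γ : Measure (ℝ × ℝ)) (t : ℝ) :
    γ.fst (Iic t) - γ.snd (Iic t) ≤ γ (Iic t ×ˢ Ioi t) := by
  rw [Measure.fst_apply measurableSet_Iic, Measure.snd_apply measurableSet_Iic, tsub_le_iff_left]
  refine (measure_mono fun p hp => ?_).trans (measure_union_le _ _)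
  rcases le_or_gt p.2 t with h | h
  · exact Or.inl h
  · exact Or.inr ⟨hp, h⟩

lemma ofReal_abs_cdf_sub_le_measure_crossing {μ ν : Measure ℝ} [IsProbabilityMeasure μ]
    [IsProbabilityMeasure ν] {γ : Measure (ℝ × ℝ)} (hγμ : γ.fst = μ) (hγν : γ.snd = ν)
    (t : ℝ) : ENNReal.ofReal |cdf μ t - cdf ν t| ≤ γ (crossing t) := by
  rcases le_total (cdf ν t) (cdf μ t) with h | h
  · rw [abs_of_nonneg (sub_nonneg.2 h), ENNReal.ofReal_sub _ (cdf_nonneg ν t), ofReal_cdf,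
      ofReal_cdf, ← hγμ, ← hγν]
    exact (fst_Iic_sub_snd_Iic_le γ t).trans (measure_mono subset_union_left)
  · have := fst_Iic_sub_snd_Iic_le (γ.map Prod.swap) t
    rw [Measure.fst_map_swap, Measure.snd_map_swap,
      Measure.map_apply measurable_swap (measurableSet_Iic.prod measurableSet_Ioi),
      preimage_swap_prod] at this
    rw [abs_of_nonpos (sub_nonpos.2 h), neg_sub, ENNReal.ofReal_sub _ (cdf_nonneg μ t),
      ofReal_cdf, ofReal_cdf, ← hγμ, ← hγν]
    exact this.trans (measure_mono subset_union_right)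

-- Only meaningful for `u ∈ (0, 1)`; elsewhere `sInf` returns a junk value.
noncomputable def quantile (μ : Measure ℝ) (u : ℝ) : ℝ := sInf {x | u ≤ cdf μ x}

section Quantile

variable {μ : Measure ℝ}

lemma quantile_le_iff {u t : ℝ} (hu : u ∈ Ioo 0 1) : quantile μ u ≤ t ↔ u ≤ cdf μ t := by
  set S := {x | u ≤ cdf μ x}
  have hne : S.Nonempty :=
    (((tendsto_cdf_atTop μ).eventually_const_lt hu.2).mono fun _ h => h.le).exists
  have hbdd : BddBelow S := by
    obtain ⟨x₀, hx₀⟩ := ((tendsto_cdf_atBot μ).eventually_lt_const hu.1).exists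
    exact ⟨x₀, fun y hy => not_lt.1 fun hyx => (hy.trans (monotone_cdf μ hyx.le)).not_gt hx₀⟩
  -- the up-set `S` contains its infimum because the cdf is right-continuous
  have hmem : u ≤ cdf μ (sInf S) := by
    refine ge_of_tendsto (((cdf μ).right_continuous _).mono_left
      (nhdsWithin_mono _ Ioi_subset_Ici_self)) ?_
    filter_upwards [self_mem_nhdsWithin] with x hx
    obtain ⟨s, hsS, hs⟩ := (csInf_lt_iff hbdd hne).1 hx
    exact hsS.trans (monotone_cdf μ hs.le)
  exact ⟨fun h => hmem.trans (monotone_cdf μ h), fun h => csInf_le hbdd h⟩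

lemma lt_quantile_iff {u t : ℝ} (hu : u ∈ Ioo 0 1) : t < quantile μ u ↔ cdf μ t < u := by
  simpa only [not_le] using (quantile_le_iff hu).not

lemma monotoneOn_quantile : MonotoneOn (quantile μ) (Ioo 0 1) := fun _ hu _ hv huv =>
  (quantile_le_iff hu).2 (huv.trans ((quantile_le_iff hv).1 le_rfl))

lemma aemeasurable_quantile : AEMeasurable (quantile μ) (volume.restrict (Ioo 0 1)) :=
  aemeasurable_restrict_of_monotoneOn measurableSet_Ioo monotoneOn_quantile

lemma volume_Iic_inter_Ioo_zero_one {c : ℝ} (hc : c ≤ 1) :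
    volume (Iic c ∩ Ioo 0 1) = ENNReal.ofReal c := by
  rw [measure_congr (ae_eq_refl (Iic c) |>.inter Ioo_ae_eq_Ioc), Iic_inter_Ioc_of_le hc,
    Real.volume_Ioc, sub_zero]

lemma map_quantile [IsProbabilityMeasure μ] :
    (volume.restrict (Ioo 0 1)).map (quantile μ) = μ := by
  refine Measure.ext_of_Iic _ _ fun t => ?_
  have hpre : quantile μ ⁻¹' Iic t ∩ Ioo 0 1 = Iic (cdf μ t) ∩ Ioo 0 1 := by
    ext u
    simp only [mem_inter_iff, mem_preimage, mem_Iic]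
    exact and_congr_left quantile_le_iff
  rw [Measure.map_apply_of_aemeasurable aemeasurable_quantile measurableSet_Iic,
    Measure.restrict_apply' measurableSet_Ioo, hpre,
    volume_Iic_inter_Ioo_zero_one (cdf_le_one μ t), ofReal_cdf]

end Quantile

noncomputable def quantileCoupling (μ ν : Measure ℝ) : Measure (ℝ × ℝ) :=
  (volume.restrict (Ioo 0 1)).map fun u => (quantile μ u, quantile ν u)

section QuantileCoupling

variable (μ ν : Measure ℝ)

lemma aemeasurable_quantile_prodMk :
    AEMeasurable (fun u => (quantile μ u, quantile ν u)) (volume.restrict (Ioo 0 1)) :=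
  aemeasurable_quantile.prodMk aemeasurable_quantile

lemma fst_quantileCoupling [IsProbabilityMeasure μ] : (quantileCoupling μ ν).fst = μ := by
  rw [quantileCoupling, Measure.fst, AEMeasurable.map_map_of_aemeasurable
    measurable_fst.aemeasurable (aemeasurable_quantile_prodMk μ ν)]
  exact map_quantile

lemma snd_quantileCoupling [IsProbabilityMeasure ν] : (quantileCoupling μ ν).snd = ν := by
  rw [quantileCoupling, Measure.snd, AEMeasurable.map_map_of_aemeasurable
    measurable_snd.aemeasurable (aemeasurable_quantile_prodMk μ ν)]
  exact map_quantile

instance : IsFiniteMeasure (quantileCoupling μ ν) := Measure.isFiniteMeasure_map _ _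

lemma quantileCoupling_apply_crossing_le (t : ℝ) :
    quantileCoupling μ ν (crossing t) ≤ ENNReal.ofReal |cdf μ t - cdf ν t| := by
  rw [quantileCoupling, Measure.map_apply_of_aemeasurable (aemeasurable_quantile_prodMk μ ν)
    (measurableSet_crossing t), Measure.restrict_apply' measurableSet_Ioo, ← Real.volume_uIoc]
  refine measure_mono fun u ⟨hcross, hu⟩ => ?_
  simp only [crossing, mem_preimage, mem_union, mem_prod, mem_Iic, mem_Ioi,
    quantile_le_iff hu, lt_quantile_iff hu] at hcross
  rw [mem_uIoc]
  tauto

end QuantileCoupling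

theorem wasserstein1_eq_integral_abs_cdf_sub_general
    (μ ν : Measure ℝ) [IsProbabilityMeasure μ] [IsProbabilityMeasure ν] :
    sInf ((fun γ : Measure (ℝ × ℝ) => ∫⁻ p, ENNReal.ofReal |p.1 - p.2| ∂γ) ''
        {γ | γ.map Prod.fst = μ ∧ γ.map Prod.snd = ν})
      = ∫⁻ x, ENNReal.ofReal |cdf μ x - cdf ν x| := by
  refine le_antisymm ?_ (le_sInf ?_)
  · refine sInf_le_of_le ⟨quantileCoupling μ ν,
      ⟨fst_quantileCoupling μ ν, snd_quantileCoupling μ ν⟩, rfl⟩ ?_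
    exact (lintegral_ofReal_abs_sub_eq_lintegral_crossing _).trans_le
      (lintegral_mono (quantileCoupling_apply_crossing_le μ ν))
  · rintro _ ⟨γ, ⟨hγμ, hγν⟩, rfl⟩
    have : IsProbabilityMeasure γ := ⟨by rw [← Measure.fst_univ, Measure.fst, hγμ, measure_univ]⟩
    exact (lintegral_mono (ofReal_abs_cdf_sub_le_measure_crossing hγμ hγν)).trans_eq
      (lintegral_ofReal_abs_sub_eq_lintegral_crossing γ).symm

/-- For Borel probability measures `μ` and `ν` on `ℝ` with finite first moments, the
1-Wasserstein distance (the infimum over couplings `γ` of `∫ |x−y| γ(dx,dy)`) equals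
`∫ |F_μ(x) − F_ν(x)| dx`, where `F_μ`, `F_ν` are the cdfs. -/
theorem wasserstein1_eq_integral_abs_cdf_sub
    (μ ν : Measure ℝ) [IsProbabilityMeasure μ] [IsProbabilityMeasure ν]
    (hμ : Integrable (fun x => x) μ) (hν : Integrable (fun x => x) ν) :
    sInf ((fun γ : Measure (ℝ × ℝ) => ∫⁻ p, ENNReal.ofReal |p.1 - p.2| ∂γ) ''
        {γ | γ.map Prod.fst = μ ∧ γ.map Prod.snd = ν})
      = ∫⁻ x, ENNReal.ofReal |cdf μ x - cdf ν x| :=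
  wasserstein1_eq_integral_abs_cdf_sub_general μ ν
end

section
/- Under the single-step jump dynamics, the anytime distribution α is invariant for the transition kernel λ(dx₊,dl₊|x,l) = ρ(x,l) λ₁(dx₊,dl₊|x,l) + (1−ρ(x,l)) λ₀(dx₊,dl₊|x,l), where ρ(x,l) = (F_τ(l+Δ|x) − F_τ(l|x))/F̄_τ(l|x), λ₁ advances the chain by κ with a new lag in [0,Δ), and λ₀ = δ_x ⊗ δ_{l+Δ}; that is, ∫∫ λ(dx₊,dl₊|x,l) α(dx,dl) = α(dx₊,dl₊). -/
/-!
Write `S x l = τ x (l, ∞)` for the survival function, so that `E_τ[H] • α` has density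
`𝟙_{l ≥ 0} S x l` with respect to `π ⊗ Leb`. Multiplying the transition by `S x l` cancels its
normalizations: `S x l • λ(x, l) = J(x, l) + S x (l + Δ) • δ_(x, l + Δ)`, where `J` is the
unnormalized jump part. Integrated over `l ≥ 0`, the no-jump part is the density on `l ≥ Δ`
translated by `Δ`. In the jump part, substituting the hold time `h = l + Δ - lp` and using that
`τ(·|x)` has no mass on `(0, Δ]` leaves `∫_{[0,Δ)} ∫ κ(·|x,h) τ(dh|x) dlp`, which the invariance
of `π` turns into `π ⊗ Leb|_{[0,Δ)}`: the density on `[0, Δ)`, where `S = 1`.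
-/

open MeasureTheory Set ProbabilityTheory
open scoped ENNReal

lemma setLIntegral_Ici_comp_add_right (g : ℝ → ℝ≥0∞) (a c : ℝ) :
    ∫⁻ y in Ici a, g (y + c) = ∫⁻ y in Ici (a + c), g y := by
  have := (measurePreserving_add_right volume c).setLIntegral_comp_preimage_emb
    (measurableEmbedding_addRight c) g (Ici (a + c))
  rwa [preimage_add_const_Ici, add_sub_cancel_right] at this

lemma setLIntegral_Ico_comp_const_sub (g : ℝ → ℝ≥0∞) (a b c : ℝ) :
    ∫⁻ y in Ico a b, g (c - y) = ∫⁻ y in Ioc (c - b) (c - a), g y := by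
  have := (Measure.measurePreserving_sub_left volume c).setLIntegral_comp_preimage_emb
    (MeasurableEquiv.subLeft c).measurableEmbedding g (Ioc (c - b) (c - a))
  rwa [preimage_const_sub_Ioc, sub_sub_cancel, sub_sub_cancel] at this

lemma ENNReal.smul_inv_smul_add_div_smul {M : Type*} [AddCommMonoid M] [Module ℝ≥0∞ M]
    {a b : ℝ≥0∞} {m n : M} (ha : a ≠ ∞) (hm : a = 0 → m = 0) (hb : a = 0 → b = 0) :
    a • (a⁻¹ • m + (b / a) • n) = m + b • n := by
  rcases eq_or_ne a 0 with rfl | ha₀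
  · simp [hm rfl, hb rfl]
  · rw [smul_add, smul_smul, smul_smul, ENNReal.mul_inv_cancel ha₀ ha,
      ENNReal.mul_div_cancel ha₀ ha, one_smul]

namespace ProbabilityTheory.Kernel

variable {α β γ : Type*} [MeasurableSpace α] [MeasurableSpace β] [MeasurableSpace γ]

lemma measurable_kernel_prodMk_right' (κ : Kernel α β) [IsSFiniteKernel κ] {s : Set (β × γ)}
    (hs : MeasurableSet s) : Measurable fun p : α × γ => κ p.1 ((·, p.2) ⁻¹' s) :=
  measurable_kernel_prodMk_left (κ := κ.prodMkRight γ)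
    (t := {q : (α × γ) × β | (q.2, q.1.2) ∈ s}) (hs.preimage (by fun_prop))

lemma measurable_apply_Ioi (κ : Kernel α ℝ) [IsSFiniteKernel κ] :
    Measurable fun p : α × ℝ => κ p.1 (Ioi p.2) :=
  κ.measurable_kernel_prodMk_right' (s := {q : ℝ × ℝ | q.2 < q.1})
    (measurableSet_lt measurable_snd measurable_fst)

lemma snd_compProd_apply (κ : Kernel α β) [IsSFiniteKernel κ]
    (η : Kernel (α × β) γ) [IsSFiniteKernel η] (a : α) {t : Set γ} (ht : MeasurableSet t) :
    snd (κ ⊗ₖ η) a t = ∫⁻ b, η (a, b) t ∂κ a := by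
  rw [snd_apply' _ _ ht, compProd_apply (measurable_snd ht)]
  rfl

lemma snd_compProd_apply_eq_bind (κ : Kernel α β) [IsSFiniteKernel κ]
    (η : Kernel (α × β) γ) [IsSFiniteKernel η] (a : α) :
    snd (κ ⊗ₖ η) a = (κ a).bind fun b => η (a, b) := by
  ext t ht
  rw [snd_compProd_apply _ _ _ ht, Measure.bind_apply (f := fun b => η (a, b)) ht
    (η.measurable.comp measurable_prodMk_left).aemeasurable]

lemma lintegral_lintegral_apply_prodMk_right (M : Kernel α β) [IsSFiniteKernel M]
    (π : Measure α) [SFinite π] (ν : Measure γ) [SFinite ν] {s : Set (β × γ)}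
    (hs : MeasurableSet s) :
    ∫⁻ a, ∫⁻ c, M a ((·, c) ⁻¹' s) ∂ν ∂π = ((M ∘ₘ π).prod ν) s := by
  rw [lintegral_lintegral_swap (f := fun a c => M a ((·, c) ⁻¹' s))
      (M.measurable_kernel_prodMk_right' hs).aemeasurable,
    Measure.prod_apply_symm hs]
  refine lintegral_congr fun c => ?_
  rw [Measure.bind_apply (measurable_prodMk_right hs) M.aemeasurable]

end ProbabilityTheory.Kernel

section SingleStep

variable {X : Type*} [MeasurableSpace X] {f : X → ℝ → ℝ} {κ : Kernel (X × ℝ) X} {Δ : ℝ}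

/-- The hold-time law `τ(·|x)`. -/
noncomputable def holdKernel (f : X → ℝ → ℝ) : Kernel X ℝ :=
  Kernel.withDensity (Kernel.const X (volume.restrict (Ioi 0))) fun x h => ENNReal.ofReal (f x h)

instance : IsSFiniteKernel (holdKernel f) :=
  Kernel.IsSFiniteKernel.withDensity _ fun _ _ => ENNReal.ofReal_ne_top

lemma holdKernel_apply (hf : Measurable fun p : X × ℝ => f p.1 p.2) (x : X) :
    holdKernel f x = (volume.restrict (Ioi 0)).withDensity fun h => ENNReal.ofReal (f x h) := by
  rw [holdKernel, Kernel.withDensity_apply _ (by fun_prop), Kernel.const_apply]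

lemma holdKernel_apply_of_subset_Ioi (hf : Measurable fun p : X × ℝ => f p.1 p.2) {x : X}
    {s : Set ℝ} (hs : MeasurableSet s) (hs₀ : s ⊆ Ioi 0) :
    holdKernel f x s = ∫⁻ h in s, ENNReal.ofReal (f x h) := by
  rw [holdKernel_apply hf, withDensity_apply _ hs, Measure.restrict_restrict hs,
    inter_eq_left.mpr hs₀]

lemma lintegral_holdKernel (hf : Measurable fun p : X × ℝ => f p.1 p.2) (x : X) {g : ℝ → ℝ≥0∞}
    (hg : Measurable g) :
    ∫⁻ h, g h ∂holdKernel f x = ∫⁻ h in Ioi 0, ENNReal.ofReal (f x h) * g h := by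
  rw [holdKernel_apply hf, lintegral_withDensity_eq_lintegral_mul _ (by fun_prop) hg]
  rfl

lemma holdKernel_Ioi_eq_one (hf : Measurable fun p : X × ℝ => f p.1 p.2) {x : X}
    [IsProbabilityMeasure (holdKernel f x)] (hmin : ∀ h ≤ Δ, f x h = 0) {l : ℝ} (hl : l ≤ Δ) :
    holdKernel f x (Ioi l) = 1 := by
  rw [← compl_Iic, prob_compl_eq_one_iff measurableSet_Iic]
  refine measure_mono_null (Iic_subset_Iic.mpr hl) ?_
  rw [holdKernel_apply hf, withDensity_apply_eq_zero' (by fun_prop)]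
  refine measure_mono_null (fun h hh => ?_) measure_empty
  simp [hmin h hh.2] at hh

/-- The unnormalized `λ₁(·|x, l)`: the new lag `lp ∈ [0, Δ)` means that the hold time
`l + Δ - lp` ran out during the step. -/
noncomputable def jumpMeasure (κ : Kernel (X × ℝ) X) (f : X → ℝ → ℝ) (Δ : ℝ) (x : X) (l : ℝ) :
    Measure (X × ℝ) :=
  (((volume : Measure ℝ).restrict (Ico 0 Δ)).withDensity
      fun lp => ENNReal.ofReal (f x (l + Δ - lp))).bind
    fun lp => (κ (x, l + Δ - lp)).map fun xp => (xp, lp)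

lemma jumpMeasure_eq_zero (hf : Measurable fun p : X × ℝ => f p.1 p.2) {x : X} {l : ℝ}
    (hl : 0 ≤ l) (h : holdKernel f x (Ioi l) = 0) : jumpMeasure κ f Δ x l = 0 := by
  have hlag : ((volume : Measure ℝ).restrict (Ico 0 Δ)).withDensity
      (fun lp => ENNReal.ofReal (f x (l + Δ - lp))) = 0 := by
    refine Measure.measure_univ_eq_zero.mp ?_
    rw [withDensity_apply _ MeasurableSet.univ, Measure.restrict_univ,
      setLIntegral_Ico_comp_const_sub (fun h => ENNReal.ofReal (f x h)), sub_zero,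
      add_sub_cancel_right, ← holdKernel_apply_of_subset_Ioi hf measurableSet_Ioc
        fun h hh => hl.trans_lt hh.1]
    exact measure_mono_null Ioc_subset_Ioi_self h
  rw [jumpMeasure, hlag, Measure.bind_zero_left]

/-- `λ = ρ λ₁ + (1 - ρ) λ₀`, with the normalizing constants of both terms combined. -/
noncomputable def lagTransition (κ : Kernel (X × ℝ) X) (f : X → ℝ → ℝ) (Δ : ℝ) (p : X × ℝ) :
    Measure (X × ℝ) :=
  (holdKernel f p.1 (Ioi p.2))⁻¹ • jumpMeasure κ f Δ p.1 p.2
    + (holdKernel f p.1 (Ioi (p.2 + Δ)) / holdKernel f p.1 (Ioi p.2)) •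
      Measure.dirac (p.1, p.2 + Δ)

/-- The anytime distribution `α` multiplied by the mean hold time. -/
noncomputable def anytimeMeasure (π : Measure X) (f : X → ℝ → ℝ) : Measure (X × ℝ) :=
  (π.prod volume).withDensity fun p => (Ici 0).indicator (fun l => holdKernel f p.1 (Ioi l)) p.2

lemma holdKernel_Ioi_smul_lagTransition (hf : Measurable fun p : X × ℝ => f p.1 p.2) {x : X}
    [IsFiniteMeasure (holdKernel f x)] (hΔ : 0 ≤ Δ) {l : ℝ} (hl : 0 ≤ l) :
    holdKernel f x (Ioi l) • lagTransition κ f Δ (x, l) =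
      jumpMeasure κ f Δ x l + holdKernel f x (Ioi (l + Δ)) • Measure.dirac (x, l + Δ) :=
  ENNReal.smul_inv_smul_add_div_smul (measure_ne_top _ _) (jumpMeasure_eq_zero hf hl)
    (measure_mono_null (Ioi_subset_Ioi (by linarith)))

lemma measurable_indicator_holdKernel_Ioi :
    Measurable fun p : X × ℝ => (Ici 0).indicator (fun l => holdKernel f p.1 (Ioi l)) p.2 :=
  (holdKernel f).measurable_apply_Ioi.indicator (measurableSet_Ici.preimage measurable_snd)

lemma lintegral_anytimeMeasure (π : Measure X) [SFinite π] {g : X × ℝ → ℝ≥0∞}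
    (hg : Measurable g) :
    ∫⁻ p, g p ∂anytimeMeasure π f =
      ∫⁻ x, ∫⁻ l in Ici 0, holdKernel f x (Ioi l) * g (x, l) ∂volume ∂π := by
  have hdens := measurable_indicator_holdKernel_Ioi (f := f)
  rw [anytimeMeasure, lintegral_withDensity_eq_lintegral_mul _ hdens hg,
    lintegral_prod _ (hdens.mul hg).aemeasurable]
  refine lintegral_congr fun x => ?_
  rw [← lintegral_indicator measurableSet_Ici]
  simp_rw [indicator_mul_left]
  rfl

lemma setLIntegral_Ici_holdKernel_Ioi_mul (hf : Measurable fun p : X × ℝ => f p.1 p.2) {x : X}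
    [IsProbabilityMeasure (holdKernel f x)] (hΔ : 0 ≤ Δ) (hmin : ∀ h ≤ Δ, f x h = 0)
    (g : ℝ → ℝ≥0∞) :
    ∫⁻ l in Ici 0, holdKernel f x (Ioi l) * g l =
      (∫⁻ l in Ico 0 Δ, g l) + ∫⁻ l in Ici Δ, holdKernel f x (Ioi l) * g l := by
  rw [← Ico_union_Ici_eq_Ici hΔ,
    lintegral_union measurableSet_Ici (Iio_disjoint_Ici le_rfl |>.mono_left Ico_subset_Iio_self)]
  congr 1
  refine setLIntegral_congr_fun measurableSet_Ico fun l hl => ?_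
  rw [holdKernel_Ioi_eq_one hf hmin hl.2.le, one_mul]

variable [IsSFiniteKernel κ]

lemma measurable_kernel_shift_apply_prodMk_right {s : Set (X × ℝ)} (hs : MeasurableSet s) :
    Measurable fun q : (X × ℝ) × ℝ => κ (q.1.1, q.1.2 + Δ - q.2) ((·, q.2) ⁻¹' s) :=
  (κ.measurable_kernel_prodMk_right' hs).comp
    (f := fun q : (X × ℝ) × ℝ => ((q.1.1, q.1.2 + Δ - q.2), q.2)) (by fun_prop)

lemma jumpMeasure_apply (hf : Measurable fun p : X × ℝ => f p.1 p.2) (x : X) (l : ℝ)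
    {s : Set (X × ℝ)} (hs : MeasurableSet s) :
    jumpMeasure κ f Δ x l s =
      ∫⁻ lp in Ico 0 Δ, ENNReal.ofReal (f x (l + Δ - lp)) * κ (x, l + Δ - lp) ((·, lp) ⁻¹' s) := by
  have hslice {t : Set (X × ℝ)} (ht : MeasurableSet t) :
      Measurable fun lp => κ (x, l + Δ - lp) ((·, lp) ⁻¹' t) :=
    (measurable_kernel_shift_apply_prodMk_right (κ := κ) (Δ := Δ) ht).comp
      (measurable_prodMk_left (x := (x, l)))
  have hmap : Measurable fun lp => (κ (x, l + Δ - lp)).map fun xp => (xp, lp) := by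
    refine Measure.measurable_of_measurable_coe _ fun t ht => ?_
    simp_rw [Measure.map_apply measurable_prodMk_right ht]
    exact hslice ht
  rw [jumpMeasure, Measure.bind_apply hs hmap.aemeasurable]
  simp_rw [Measure.map_apply measurable_prodMk_right hs]
  exact lintegral_withDensity_eq_lintegral_mul _ (by fun_prop) (hslice hs)

lemma measurable_jumpMeasure_apply (hf : Measurable fun p : X × ℝ => f p.1 p.2)
    {s : Set (X × ℝ)} (hs : MeasurableSet s) :
    Measurable fun p : X × ℝ => jumpMeasure κ f Δ p.1 p.2 s := by
  simp_rw [jumpMeasure_apply hf _ _ hs]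
  refine Measurable.lintegral_prod_right' (f := fun q : (X × ℝ) × ℝ =>
    ENNReal.ofReal (f q.1.1 (q.1.2 + Δ - q.2)) * κ (q.1.1, q.1.2 + Δ - q.2) ((·, q.2) ⁻¹' s)) ?_
  exact (by fun_prop : Measurable _).mul (measurable_kernel_shift_apply_prodMk_right hs)

lemma lintegral_jumpMeasure (hf : Measurable fun p : X × ℝ => f p.1 p.2) {x : X}
    (hmin : ∀ h ≤ Δ, f x h = 0) {s : Set (X × ℝ)} (hs : MeasurableSet s) :
    ∫⁻ l in Ici 0, jumpMeasure κ f Δ x l s =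
      ∫⁻ lp in Ico 0 Δ, Kernel.snd (holdKernel f ⊗ₖ κ) x ((·, lp) ⁻¹' s) := by
  simp_rw [jumpMeasure_apply hf x _ hs]
  rw [lintegral_lintegral_swap (f := fun l lp =>
      ENNReal.ofReal (f x (l + Δ - lp)) * κ (x, l + Δ - lp) ((·, lp) ⁻¹' s))
    ((by fun_prop : Measurable _).mul ((measurable_kernel_shift_apply_prodMk_right hs).comp
      (f := fun q : ℝ × ℝ => ((x, q.1), q.2)) (by fun_prop))).aemeasurable]
  refine setLIntegral_congr_fun measurableSet_Ico fun lp hlp => ?_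
  set g := fun h => ENNReal.ofReal (f x h) * κ (x, h) ((·, lp) ⁻¹' s)
  have hg_supp : g.support ⊆ Ioi Δ := fun h hh =>
    mem_Ioi.mpr <| not_le.mp fun hle => hh (by simp [g, hmin h hle])
  simp_rw [add_sub_assoc]
  calc ∫⁻ l in Ici 0, g (l + (Δ - lp)) = ∫⁻ h in Ici (0 + (Δ - lp)), g h :=
        setLIntegral_Ici_comp_add_right g 0 (Δ - lp)
    _ = ∫⁻ h in Ioi 0, g h := by
        rw [setLIntegral_eq_of_support_subset (hg_supp.trans fun h hh => ?_),
          setLIntegral_eq_of_support_subset (hg_supp.trans fun h hh => ?_)]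
        · exact (hlp.1.trans_lt hlp.2).trans hh
        · exact mem_Ici.mpr (by linarith [hlp.1, mem_Ioi.mp hh])
    _ = ∫⁻ h, κ (x, h) ((·, lp) ⁻¹' s) ∂holdKernel f x :=
        (lintegral_holdKernel hf x (g := fun h => κ (x, h) ((·, lp) ⁻¹' s))
          ((κ.measurable_coe (measurable_prodMk_right hs)).comp measurable_prodMk_left)).symm
    _ = _ := (Kernel.snd_compProd_apply _ _ _ (measurable_prodMk_right hs)).symm

lemma measurable_lagTransition (hf : Measurable fun p : X × ℝ => f p.1 p.2) :
    Measurable (lagTransition κ f Δ) := by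
  refine Measure.measurable_of_measurable_coe _ fun t ht => ?_
  simp only [lagTransition, Measure.add_apply, Measure.smul_apply, smul_eq_mul,
    Measure.dirac_apply' _ ht]
  have hS := (holdKernel f).measurable_apply_Ioi
  have hshift : Measurable fun p : X × ℝ => (p.1, p.2 + Δ) := by fun_prop
  exact (hS.inv.mul (measurable_jumpMeasure_apply hf ht)).add
    (((hS.comp hshift).div hS).mul ((measurable_one.indicator ht).comp hshift))

lemma setLIntegral_holdKernel_Ioi_mul_lagTransition (hf : Measurable fun p : X × ℝ => f p.1 p.2)
    [∀ x, IsFiniteMeasure (holdKernel f x)] (hΔ : 0 ≤ Δ) {s : Set (X × ℝ)} (hs : MeasurableSet s)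
    (x : X) :
    ∫⁻ l in Ici 0, holdKernel f x (Ioi l) * lagTransition κ f Δ (x, l) s =
      (∫⁻ l in Ici 0, jumpMeasure κ f Δ x l s) +
        ∫⁻ l in Ici Δ, holdKernel f x (Ioi l) * s.indicator 1 (x, l) := by
  have hJ : Measurable fun l => jumpMeasure κ f Δ x l s :=
    Measurable.of_uncurry_left (f := fun x l => jumpMeasure κ f Δ x l s)
      (measurable_jumpMeasure_apply hf hs)
  have hstay := setLIntegral_Ici_comp_add_right
    (fun l => holdKernel f x (Ioi l) * s.indicator 1 (x, l)) 0 Δ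
  rw [zero_add] at hstay
  rw [← hstay, ← lintegral_add_left hJ]
  refine setLIntegral_congr_fun measurableSet_Ici fun l hl => ?_
  rw [← smul_eq_mul, ← Measure.smul_apply, holdKernel_Ioi_smul_lagTransition hf hΔ hl,
    Measure.add_apply, Measure.smul_apply, Measure.dirac_apply' _ hs, smul_eq_mul]

lemma lintegral_setLIntegral_jumpMeasure (hf : Measurable fun p : X × ℝ => f p.1 p.2)
    (hmin : ∀ x, ∀ h ≤ Δ, f x h = 0) (π : Measure X) [SFinite π]
    (hinv : Kernel.snd (holdKernel f ⊗ₖ κ) ∘ₘ π = π) {s : Set (X × ℝ)} (hs : MeasurableSet s) :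
    ∫⁻ x, ∫⁻ l in Ici 0, jumpMeasure κ f Δ x l s ∂volume ∂π =
      (π.prod (volume.restrict (Ico 0 Δ))) s := by
  simp_rw [lintegral_jumpMeasure hf (hmin _) hs]
  rw [Kernel.lintegral_lintegral_apply_prodMk_right _ _ _ hs, hinv]

theorem anytimeMeasure_bind_lagTransition (hf : Measurable fun p : X × ℝ => f p.1 p.2)
    [∀ x, IsProbabilityMeasure (holdKernel f x)] (hΔ : 0 ≤ Δ)
    (hmin : ∀ x, ∀ h ≤ Δ, f x h = 0) (π : Measure X) [SFinite π]
    (hinv : Kernel.snd (holdKernel f ⊗ₖ κ) ∘ₘ π = π) :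
    (anytimeMeasure π f).bind (lagTransition κ f Δ) = anytimeMeasure π f := by
  ext s hs
  have hind : Measurable (s.indicator (1 : X × ℝ → ℝ≥0∞)) := measurable_one.indicator hs
  have hlate : Measurable fun x =>
      ∫⁻ l in Ici Δ, holdKernel f x (Ioi l) * s.indicator 1 (x, l) :=
    ((holdKernel f).measurable_apply_Ioi.mul hind).lintegral_prod_right'
  rw [Measure.bind_apply hs (measurable_lagTransition hf).aemeasurable,
    lintegral_anytimeMeasure π (g := fun p => lagTransition κ f Δ p s)
      (Measure.measurable_coe hs |>.comp (measurable_lagTransition hf)),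
    ← lintegral_indicator_one hs, lintegral_anytimeMeasure π hind]
  simp_rw [setLIntegral_holdKernel_Ioi_mul_lagTransition hf hΔ hs,
    setLIntegral_Ici_holdKernel_Ioi_mul hf hΔ (hmin _)]
  rw [lintegral_add_right _ hlate, lintegral_add_right _ hlate,
    lintegral_setLIntegral_jumpMeasure hf hmin π hinv hs, Measure.prod_apply hs]
  congr 1
  exact lintegral_congr fun x => (lintegral_indicator_one (measurable_prodMk_left hs)).symm

end SingleStep

theorem anytime_invariant_single_step_general {X : Type*} [MeasurableSpace X]
    (π : Measure X) [IsProbabilityMeasure π]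
    -- the joint kernel κ(dxp | x, h):
    (κ : ProbabilityTheory.Kernel (X × ℝ) X) [ProbabilityTheory.IsMarkovKernel κ]
    -- the hold-time density f x h of τ(dh|x) with respect to Lebesgue measure on (0,∞):
    (f : X → ℝ → ℝ) (hf : Measurable fun p : X × ℝ => f p.1 p.2)
    -- τ(·|x) is a probability measure on (0,∞):
    (τ : X → Measure ℝ)
    (hτ : ∀ x, τ x = ((volume : Measure ℝ).restrict (Set.Ioi 0)).withDensity
        (fun h => ENNReal.ofReal (f x h)))
    (hτ_prob : ∀ x, IsProbabilityMeasure (τ x))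
    -- minimal hold time: τ((0,Δ]|x) = 0:
    (Δ : ℝ) (hΔ : 0 < Δ) (hmin : ∀ x h, h ≤ Δ → f x h = 0)
    -- finite positive overall mean hold time:
    (EH : ℝ≥0∞)
    -- π is invariant for the marginal kernel ∫₀^∞ κ(dxp|x,h) τ(dh|x):
    (hinv : π.bind (fun x => (τ x).bind (fun h => κ (x, h))) = π)
    -- the anytime distribution α:
    (α : Measure (X × ℝ))
    (hα : α = (π.prod (volume : Measure ℝ)).withDensity
        (fun p => (Set.Ici (0 : ℝ)).indicator (fun l => τ p.1 (Set.Ioi l) / EH) p.2))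
    -- the transition kernel Λ = ρ·λ₁ + (1−ρ)·λ₀:
    (Λ : X × ℝ → Measure (X × ℝ))
    (hΛ : ∀ x l, Λ (x, l) =
        (τ x (Set.Ioi l))⁻¹ •
          (((volume : Measure ℝ).restrict (Set.Ico 0 Δ)).withDensity
              (fun lp => ENNReal.ofReal (f x (l + Δ - lp)))).bind
            (fun lp => (κ (x, l + Δ - lp)).map (fun xp => (xp, lp)))
        + (τ x (Set.Ioi (l + Δ)) / τ x (Set.Ioi l)) • Measure.dirac (x, l + Δ)) :
    α.bind Λ = α := by
  obtain rfl : τ = holdKernel f := funext fun x => (hτ x).trans (holdKernel_apply hf x).symm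
  obtain rfl : Λ = lagTransition κ f Δ := funext fun p => hΛ p.1 p.2
  have hinv' : Kernel.snd (holdKernel f ⊗ₖ κ) ∘ₘ π = π := by
    simpa only [← Kernel.snd_compProd_apply_eq_bind] using hinv
  have hα' : α = EH⁻¹ • anytimeMeasure π f := by
    rw [hα, anytimeMeasure, ← withDensity_smul _ measurable_indicator_holdKernel_Ioi]
    congr with p
    by_cases hp : p.2 ∈ Ici 0 <;> simp [hp, div_eq_mul_inv, mul_comm]
  rw [hα', Measure.bind_smul, anytimeMeasure_bind_lagTransition hf hΔ.le hmin π hinv']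

/-- Under the single-step jump dynamics, the anytime distribution
`α(dx,dl) = (F̄_τ(l|x)/E_τ[H]) π(dx) dl` is invariant for the transition kernel
`λ(dxp,dlp|x,l) = ρ(x,l) λ₁(dxp,dlp|x,l) + (1−ρ(x,l)) λ₀(dxp,dlp|x,l)`, where
`ρ(x,l) = (F_τ(l+Δ|x) − F_τ(l|x))/F̄_τ(l|x)` is the probability of a jump,
`λ₁(dxp,dlp|x,l) = κ(dxp|x,l+Δ−lp) τ(l+Δ−lp|x) 𝟙_{[0,Δ)}(dlp)/(F_τ(l+Δ|x)−F_τ(l|x))`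
is the transition if a jump occurs, and `λ₀ = δ_x ⊗ δ_{l+Δ}` is the transition if no
jump occurs.  Here `τ(·|x)` has density `f x` on `(0,∞)` with no mass on `(0,Δ]`
(minimal hold time), and `π` is invariant for the marginal kernel
`κ(dxp|x) = ∫₀^∞ κ(dxp|x,h) τ(h|x) dh`.  The mixture kernel is written below with the
normalization constants of `ρ·λ₁` and `(1−ρ)·λ₀` combined, which is equivalent:
`ρ·λ₁ = F̄_τ(l|x)⁻¹ · (unnormalized λ₁)` and `(1−ρ) = F̄_τ(l+Δ|x)/F̄_τ(l|x)`. -/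
theorem anytime_invariant_single_step {X : Type*} [MeasurableSpace X]
    (π : Measure X) [IsProbabilityMeasure π]
    -- the joint kernel κ(dxp | x, h):
    (κ : ProbabilityTheory.Kernel (X × ℝ) X) [ProbabilityTheory.IsMarkovKernel κ]
    -- the hold-time density f x h of τ(dh|x) with respect to Lebesgue measure on (0,∞):
    (f : X → ℝ → ℝ) (hf : Measurable fun p : X × ℝ => f p.1 p.2)
    (hf_nonneg : ∀ x h, 0 ≤ f x h)
    -- τ(·|x) is a probability measure on (0,∞):
    (τ : X → Measure ℝ)
    (hτ : ∀ x, τ x = ((volume : Measure ℝ).restrict (Set.Ioi 0)).withDensity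
        (fun h => ENNReal.ofReal (f x h)))
    (hτ_prob : ∀ x, IsProbabilityMeasure (τ x))
    -- minimal hold time: τ((0,Δ]|x) = 0:
    (Δ : ℝ) (hΔ : 0 < Δ) (hmin : ∀ x h, h ≤ Δ → f x h = 0)
    -- finite positive overall mean hold time:
    (EH : ℝ≥0∞)
    (hEH : EH = ∫⁻ x, (∫⁻ l in Set.Ici (0 : ℝ), τ x (Set.Ioi l)) ∂π)
    (hEH0 : EH ≠ 0) (hEHtop : EH ≠ ∞)
    -- π is invariant for the marginal kernel ∫₀^∞ κ(dxp|x,h) τ(dh|x):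
    (hinv : π.bind (fun x => (τ x).bind (fun h => κ (x, h))) = π)
    -- the anytime distribution α:
    (α : Measure (X × ℝ))
    (hα : α = (π.prod (volume : Measure ℝ)).withDensity
        (fun p => (Set.Ici (0 : ℝ)).indicator (fun l => τ p.1 (Set.Ioi l) / EH) p.2))
    -- the transition kernel Λ = ρ·λ₁ + (1−ρ)·λ₀:
    (Λ : X × ℝ → Measure (X × ℝ))
    (hΛ : ∀ x l, Λ (x, l) =
        (τ x (Set.Ioi l))⁻¹ •
          (((volume : Measure ℝ).restrict (Set.Ico 0 Δ)).withDensity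
              (fun lp => ENNReal.ofReal (f x (l + Δ - lp)))).bind
            (fun lp => (κ (x, l + Δ - lp)).map (fun xp => (xp, lp)))
        + (τ x (Set.Ioi (l + Δ)) / τ x (Set.Ioi l)) • Measure.dirac (x, l + Δ)) :
    α.bind Λ = α :=
  anytime_invariant_single_step_general π κ f hf τ hτ hτ_prob Δ hΔ hmin EH hinv α hα Λ hΛ
end
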